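/- Hyperbolic analogue of Lemma 2.2, second part (the dual face formula in the hyperboloid model, vertex-star form, Section 3.1). Let (m, p_0, p) be a hyperbolic vertex star with edge weights c_j and vertex weight d_0. Then ∑_{j∈ZMod m} c_j·p_j = ( 2·d_0 + ∑_{j∈ZMod m} c_j )·p_0; equivalently, ∑_{j∈ZMod m} c_j·(p_j − p_0) = 2·d_0·p_0. (This is the hyperbolic analogue of the spherical identity, with a sign change in the d-term.) -/

import Mathlib

/-!
By the hyperbolic law of cosines and `tan (θ / 2) = sin θ / (1 + cos θ)`, the half-angle
tangents of a triangle `(p₀, b, c)` are rational in the Minkowski products and `det (p₀, b, c)`.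
With these values the weighted tangent vectors `b + ⟪p₀, b⟫ p₀` and `c + ⟪p₀, c⟫ p₀` of the
triangle sum to `F b - F c`, where `F q = (1 - ⟪p₀, q⟫)⁻¹ (p₀ × q)` with the Minkowski cross
product. Summed around the star, the tangential part `∑ c_j (p_j + ⟪p₀, p_j⟫ p₀)` therefore
telescopes to `0`, and what remains is `-∑ c_j ⟪p₀, p_j⟫ p₀ = ∑ c_j (1 + 2 sinh² (λ_j / 2)) p₀`.
-/

noncomputable section

/-- Minkowski inner product on `ℝ³` (signature `(−,+,+)`). -/
def mink (x y : Fin 3 → ℝ) : ℝ := -(x 0 * y 0) + x 1 * y 1 + x 2 * y 2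

/-- Cross product on `ℝ³` (Euclidean), used for the determinant. -/
def cross3 (x y : Fin 3 → ℝ) : Fin 3 → ℝ :=
  ![x 1 * y 2 - x 2 * y 1, x 2 * y 0 - x 0 * y 2, x 0 * y 1 - x 1 * y 0]

/-- Standard inner product on `ℝ³`. -/
def dot3 (x y : Fin 3 → ℝ) : ℝ := x 0 * y 0 + x 1 * y 1 + x 2 * y 2

/-- Determinant of three vectors in `ℝ³`. -/
def det3 (x y z : Fin 3 → ℝ) : ℝ := dot3 (cross3 x y) z

/-- The hyperboloid model of the hyperbolic plane. -/
def inH2 (x : Fin 3 → ℝ) : Prop := mink x x = -1 ∧ 0 < x 0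

/-- Inverse hyperbolic cosine. -/
def arcosh (x : ℝ) : ℝ := Real.log (x + Real.sqrt (x ^ 2 - 1))

/-- Hyperbolic angle at `p` between `b` and `c` (all points of `ℍ²`). -/
def hypAngle (p b c : Fin 3 → ℝ) : ℝ :=
  Real.arccos (mink (b + mink p b • p) (c + mink p c • p) /
    (Real.sqrt (mink (b + mink p b • p) (b + mink p b • p)) *
     Real.sqrt (mink (c + mink p c • p) (c + mink p c • p))))

/-- Edge weight `c_j` of the edge `(p₀, p_j)` of a hyperbolic vertex star. -/
def hypStarWeight (m : ℕ) (p0 : Fin 3 → ℝ) (p : ZMod m → Fin 3 → ℝ) (j : ZMod m) : ℝ :=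
  (Real.tan ((hypAngle p0 (p j) (p (j+1)) + hypAngle (p j) (p (j+1)) p0
      - hypAngle (p (j+1)) p0 (p j)) / 2)
   + Real.tan ((hypAngle p0 (p (j-1)) (p j) + hypAngle (p j) p0 (p (j-1))
      - hypAngle (p (j-1)) (p j) p0) / 2))
  / (2 * Real.cosh (arcosh (-(mink p0 (p j))) / 2) ^ 2)

/-- Vertex weight `d₀` of a hyperbolic vertex star. -/
def hypStarVertexWeight (m : ℕ) [NeZero m] (p0 : Fin 3 → ℝ) (p : ZMod m → Fin 3 → ℝ) : ℝ :=
  ∑ j : ZMod m, hypStarWeight m p0 p j * Real.sinh (arcosh (-(mink p0 (p j))) / 2) ^ 2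

def mcross (x y : Fin 3 → ℝ) : Fin 3 → ℝ :=
  ![-(x 1 * y 2 - x 2 * y 1), x 2 * y 0 - x 0 * y 2, x 0 * y 1 - x 1 * y 0]

section MinkowskiAlgebra

variable (x y z : Fin 3 → ℝ)

theorem mink_comm : mink x y = mink y x := by
  simp only [mink]; ring

@[simp]
theorem mink_add_left : mink (x + y) z = mink x z + mink y z := by
  simp only [mink, Pi.add_apply]; ring

@[simp]
theorem mink_add_right : mink x (y + z) = mink x y + mink x z := by
  simp only [mink, Pi.add_apply]; ring

@[simp]
theorem mink_sub_left : mink (x - y) z = mink x z - mink y z := by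
  simp only [mink, Pi.sub_apply]; ring

@[simp]
theorem mink_smul_left (r : ℝ) : mink (r • x) y = r * mink x y := by
  simp only [mink, Pi.smul_apply, smul_eq_mul]; ring

@[simp]
theorem mink_smul_right (r : ℝ) : mink x (r • y) = r * mink x y := by
  simp only [mink, Pi.smul_apply, smul_eq_mul]; ring

theorem det3_eq : det3 x y z = (x 1 * y 2 - x 2 * y 1) * z 0 + (x 2 * y 0 - x 0 * y 2) * z 1
    + (x 0 * y 1 - x 1 * y 0) * z 2 := by
  simp [det3, dot3, cross3]

@[simp]
theorem mink_mcross : mink (mcross x y) z = det3 x y z := by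
  simp [mink, mcross, det3_eq]; ring

theorem det3_rotate : det3 y z x = det3 x y z := by
  simp only [det3_eq]; ring

theorem det3_swap_right : det3 x z y = -det3 x y z := by
  simp only [det3_eq]; ring

@[simp]
theorem det3_eq_zero_of_third_eq_first : det3 x y x = 0 := by
  rw [det3_eq]; ring

@[simp]
theorem det3_eq_zero_of_third_eq_second : det3 x y y = 0 := by
  rw [det3_eq]; ring

theorem det3_sq_of_mink_self (hx : mink x x = -1) (hy : mink y y = -1) (hz : mink z z = -1) :
    det3 x y z ^ 2 = 1 - 2 * mink x y * mink x z * mink y z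
      - mink x y ^ 2 - mink x z ^ 2 - mink y z ^ 2 := by
  have gram : det3 x y z ^ 2
      = -(mink x x * (mink y y * mink z z - mink y z ^ 2)
          - mink x y * (mink x y * mink z z - mink y z * mink x z)
          + mink x z * (mink x y * mink y z - mink y y * mink x z)) := by
    simp only [mink, det3_eq]; ring
  rw [gram, hx, hy, hz]; ring

theorem eq_of_mink_eq {a b c : Fin 3 → ℝ} (habc : det3 a b c ≠ 0)
    (ha : mink x a = mink y a) (hb : mink x b = mink y b) (hc : mink x c = mink y c) :
    x = y := by
  simp only [mink] at ha hb hc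
  have h0 : x 0 = y 0 := mul_left_cancel₀ habc <| by
    rw [det3_eq]
    linear_combination (-(b 1 * c 2 - b 2 * c 1)) * ha + (a 1 * c 2 - a 2 * c 1) * hb
      + (-(a 1 * b 2 - a 2 * b 1)) * hc
  have h1 : x 1 = y 1 := mul_left_cancel₀ habc <| by
    rw [det3_eq]
    linear_combination (-(b 0 * c 2 - b 2 * c 0)) * ha + (a 0 * c 2 - a 2 * c 0) * hb
      + (-(a 0 * b 2 - a 2 * b 0)) * hc
  have h2 : x 2 = y 2 := mul_left_cancel₀ habc <| by
    rw [det3_eq]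
    linear_combination (b 0 * c 1 - b 1 * c 0) * ha + (-(a 0 * c 1 - a 1 * c 0)) * hb
      + (a 0 * b 1 - a 1 * b 0) * hc
  funext i
  fin_cases i
  exacts [h0, h1, h2]

end MinkowskiAlgebra

section Hyperboloid

variable {x y z : Fin 3 → ℝ}

theorem mink_le_neg_one (hx : inH2 x) (hy : inH2 y) : mink x y ≤ -1 := by
  obtain ⟨hx1, hx2⟩ := hx
  obtain ⟨hy1, hy2⟩ := hy
  simp only [mink] at hx1 hy1 ⊢
  nlinarith [sq_nonneg (x 1 - y 1), sq_nonneg (x 2 - y 2),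
    sq_nonneg (x 1 * y 2 - x 2 * y 1), mul_pos hx2 hy2,
    sq_nonneg (x 0 * y 0 - 1), sq_nonneg (x 0 - y 0),
    sq_nonneg (x 0 * y 0 + 1 + x 1 * y 1 + x 2 * y 2)]

theorem mink_lt_neg_one_of_det3_ne_zero (hx : inH2 x) (hy : inH2 y) (hz : inH2 z)
    (hxyz : det3 x y z ≠ 0) : mink x y < -1 := by
  refine (mink_le_neg_one hx hy).lt_of_ne fun hxy => hxyz ?_
  have hsq := det3_sq_of_mink_self x y z hx.1 hy.1 hz.1
  rw [hxy] at hsq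
  have : det3 x y z ^ 2 = -(mink x z - mink y z) ^ 2 := by linear_combination hsq
  nlinarith [sq_nonneg (det3 x y z), sq_nonneg (mink x z - mink y z)]

end Hyperboloid

theorem hypAngle_comm (p b c : Fin 3 → ℝ) : hypAngle p b c = hypAngle p c b := by
  rw [hypAngle, hypAngle, mink_comm (b + _), mul_comm (Real.sqrt _)]

theorem hypAngle_eq_arccos {p b c : Fin 3 → ℝ} (hp : mink p p = -1) (hb : mink b b = -1)
    (hc : mink c c = -1) :
    hypAngle p b c = Real.arccos ((mink b c + mink p b * mink p c) /
      (Real.sqrt (mink p b ^ 2 - 1) * Real.sqrt (mink p c ^ 2 - 1))) := by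
  have tangent (x y : Fin 3 → ℝ) :
      mink (x + mink p x • p) (y + mink p y • p) = mink x y + mink p x * mink p y := by
    simp only [mink_add_left, mink_add_right, mink_smul_left, mink_smul_right, hp]
    rw [mink_comm x p]
    ring
  rw [hypAngle, tangent, tangent, tangent, hb, hc]
  ring_nf

theorem cos_arccos_div_of_sq_add_sq {n v s : ℝ} (hs : 0 < s) (h : n ^ 2 + v ^ 2 = s ^ 2) :
    Real.cos (Real.arccos (n / s)) = n / s := by
  obtain ⟨hlo, hhi⟩ := abs_le_of_sq_le_sq' (by nlinarith [sq_nonneg v] : n ^ 2 ≤ s ^ 2) hs.le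
  exact Real.cos_arccos (by rwa [le_div_iff₀ hs, neg_one_mul])
    (by rwa [div_le_one hs])

theorem sin_arccos_div_of_sq_add_sq {n v s : ℝ} (hs : 0 < s) (h : n ^ 2 + v ^ 2 = s ^ 2) :
    Real.sin (Real.arccos (n / s)) = |v| / s := by
  rw [Real.sin_arccos, show 1 - (n / s) ^ 2 = (v / s) ^ 2 by field_simp; linarith,
    Real.sqrt_sq_eq_abs, abs_div, abs_of_pos hs]

section HyperbolicTriangle

variable {a b c : Fin 3 → ℝ}

theorem sq_add_det3_sq (ha : mink a a = -1) (hb : mink b b = -1) (hc : mink c c = -1) :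
    (mink b c + mink a b * mink a c) ^ 2 + det3 a b c ^ 2
      = (mink a b ^ 2 - 1) * (mink a c ^ 2 - 1) := by
  rw [det3_sq_of_mink_self a b c ha hb hc]; ring

theorem sqrt_mul_sqrt_pos (ha : inH2 a) (hb : inH2 b) (hc : inH2 c) (habc : det3 a b c ≠ 0) :
    0 < Real.sqrt (mink a b ^ 2 - 1) * Real.sqrt (mink a c ^ 2 - 1) := by
  have hab := mink_lt_neg_one_of_det3_ne_zero ha hb hc habc
  have hac := mink_lt_neg_one_of_det3_ne_zero ha hc hb (by rwa [det3_swap_right, neg_ne_zero])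
  exact mul_pos (Real.sqrt_pos.2 (by nlinarith)) (Real.sqrt_pos.2 (by nlinarith))

theorem sq_sqrt_mul_sqrt (ha : inH2 a) (hb : inH2 b) (hc : inH2 c) :
    (Real.sqrt (mink a b ^ 2 - 1) * Real.sqrt (mink a c ^ 2 - 1)) ^ 2
      = (mink a b ^ 2 - 1) * (mink a c ^ 2 - 1) := by
  have hab := mink_le_neg_one ha hb
  have hac := mink_le_neg_one ha hc
  rw [mul_pow, Real.sq_sqrt (by nlinarith), Real.sq_sqrt (by nlinarith)]

theorem cos_hypAngle (ha : inH2 a) (hb : inH2 b) (hc : inH2 c) (habc : det3 a b c ≠ 0) :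
    Real.cos (hypAngle a b c) = (mink b c + mink a b * mink a c) /
      (Real.sqrt (mink a b ^ 2 - 1) * Real.sqrt (mink a c ^ 2 - 1)) := by
  rw [hypAngle_eq_arccos ha.1 hb.1 hc.1]
  refine cos_arccos_div_of_sq_add_sq (v := det3 a b c) (sqrt_mul_sqrt_pos ha hb hc habc) ?_
  rw [sq_sqrt_mul_sqrt ha hb hc, sq_add_det3_sq ha.1 hb.1 hc.1]

theorem sin_hypAngle (ha : inH2 a) (hb : inH2 b) (hc : inH2 c) (habc : det3 a b c ≠ 0) :
    Real.sin (hypAngle a b c) = |det3 a b c| /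
      (Real.sqrt (mink a b ^ 2 - 1) * Real.sqrt (mink a c ^ 2 - 1)) := by
  rw [hypAngle_eq_arccos ha.1 hb.1 hc.1]
  refine sin_arccos_div_of_sq_add_sq (sqrt_mul_sqrt_pos ha hb hc habc) ?_
  rw [sq_sqrt_mul_sqrt ha hb hc, sq_add_det3_sq ha.1 hb.1 hc.1]

end HyperbolicTriangle

theorem tan_half_eq_sin_div_one_add_cos {θ : ℝ} (h : Real.cos θ ≠ -1) :
    Real.tan (θ / 2) = Real.sin θ / (1 + Real.cos θ) := by
  have hcos : Real.cos θ = 2 * Real.cos (θ / 2) ^ 2 - 1 := by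
    rw [← Real.cos_two_mul, mul_div_cancel₀ _ two_ne_zero]
  have hsin : Real.sin θ = 2 * Real.sin (θ / 2) * Real.cos (θ / 2) := by
    rw [← Real.sin_two_mul, mul_div_cancel₀ _ two_ne_zero]
  have hhalf : Real.cos (θ / 2) ≠ 0 := fun h0 => h (by rw [hcos, h0]; ring)
  rw [Real.tan_eq_sin_div_cos, hsin, hcos]
  field_simp
  ring

/-- The hyperbolic law of cosines for a triangle `abc` with angles `α, β, γ`, written with
`x, y, z = ⟪b, c⟫, ⟪a, c⟫, ⟪a, b⟫`, `sx = √(x ^ 2 - 1)` etc. and `V = |det (a, b, c)|`. -/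
theorem tan_half_add_sub_eq_of_cos_sin {x y z sx sy sz V α β γ : ℝ}
    (hx : x ≤ -1) (hy : y ≤ -1) (hz : z < -1) (hV : 0 < V)
    (hsx : 0 < sx) (hsy : 0 < sy) (hsz : 0 < sz)
    (hsx2 : sx ^ 2 = x ^ 2 - 1) (hsy2 : sy ^ 2 = y ^ 2 - 1) (hsz2 : sz ^ 2 = z ^ 2 - 1)
    (hV2 : V ^ 2 = 1 - 2 * x * y * z - x ^ 2 - y ^ 2 - z ^ 2)
    (hcα : Real.cos α = (x + z * y) / (sz * sy)) (hsα : Real.sin α = V / (sz * sy))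
    (hcβ : Real.cos β = (y + x * z) / (sx * sz)) (hsβ : Real.sin β = V / (sx * sz))
    (hcγ : Real.cos γ = (z + y * x) / (sy * sx)) (hsγ : Real.sin γ = V / (sy * sx)) :
    Real.tan ((α + β - γ) / 2) = (z - x - y - 1) / V := by
  have hK : 0 < (1 - x) * (1 - y) * (-1 - z) := by
    have : 0 < 1 - x := by linarith
    have : 0 < 1 - y := by linarith
    have : 0 < -1 - z := by linarith
    positivity
  have hsin : Real.sin (α + β - γ) * (sx ^ 2 * sy ^ 2 * sz ^ 2)
      = (z - x - y - 1) * ((1 - x) * (1 - y) * (-1 - z)) * V := by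
    rw [Real.sin_sub, Real.sin_add, Real.cos_add, hcα, hsα, hcβ, hsβ, hcγ, hsγ]
    field_simp
    linear_combination hV2
  have hcos : (1 + Real.cos (α + β - γ)) * (sx ^ 2 * sy ^ 2 * sz ^ 2)
      = ((1 - x) * (1 - y) * (-1 - z)) * V ^ 2 := by
    rw [Real.cos_sub, Real.cos_add, Real.sin_add, hcα, hsα, hcβ, hsβ, hcγ, hsγ]
    field_simp
    linear_combination (sy ^ 2 * sz ^ 2) * hsx2 + ((x ^ 2 - 1) * sz ^ 2) * hsy2
      + ((x ^ 2 - 1) * (y ^ 2 - 1)) * hsz2 + (1 + x * y * z) * hV2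
  have hD : 0 < sx ^ 2 * sy ^ 2 * sz ^ 2 := by positivity
  have hcos_pos : 0 < 1 + Real.cos (α + β - γ) := by
    refine pos_of_mul_pos_left ?_ hD.le
    rw [hcos]
    positivity
  rw [tan_half_eq_sin_div_one_add_cos (by linarith), div_eq_div_iff hcos_pos.ne' hV.ne']
  refine mul_right_cancel₀ hD.ne' ?_
  linear_combination V * hsin - (z - x - y - 1) * hcos

theorem sqrt_sq_sub_one_pos {x : ℝ} (hx : x < -1) : 0 < Real.sqrt (x ^ 2 - 1) :=
  Real.sqrt_pos.2 (by nlinarith)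

theorem sq_sqrt_sq_sub_one {x : ℝ} (hx : x ≤ -1) : Real.sqrt (x ^ 2 - 1) ^ 2 = x ^ 2 - 1 :=
  Real.sq_sqrt (by nlinarith)

theorem tan_half_hypAngle_add_sub {a b c : Fin 3 → ℝ} (ha : inH2 a) (hb : inH2 b) (hc : inH2 c)
    (habc : det3 a b c ≠ 0) :
    Real.tan ((hypAngle a b c + hypAngle b c a - hypAngle c a b) / 2)
      = (mink a b - mink b c - mink a c - 1) / |det3 a b c| := by
  have hbca : det3 b c a ≠ 0 := by rwa [det3_rotate]
  have hcab : det3 c a b ≠ 0 := by rwa [← det3_rotate] at hbca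
  have hx := mink_lt_neg_one_of_det3_ne_zero hb hc ha hbca
  have hy := mink_lt_neg_one_of_det3_ne_zero ha hc hb (by rwa [det3_swap_right, neg_ne_zero])
  have hz := mink_lt_neg_one_of_det3_ne_zero ha hb hc habc
  have hcβ := cos_hypAngle hb hc ha hbca
  have hsβ := sin_hypAngle hb hc ha hbca
  have hcγ := cos_hypAngle hc ha hb hcab
  have hsγ := sin_hypAngle hc ha hb hcab
  rw [mink_comm c a, mink_comm b a] at hcβ
  rw [mink_comm b a, det3_rotate] at hsβ
  rw [mink_comm c a, mink_comm c b] at hcγ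
  rw [mink_comm c a, mink_comm c b, ← det3_rotate c a b] at hsγ
  exact tan_half_add_sub_eq_of_cos_sin hx.le hy.le hz (abs_pos.2 habc)
    (sqrt_sq_sub_one_pos hx) (sqrt_sq_sub_one_pos hy) (sqrt_sq_sub_one_pos hz)
    (sq_sqrt_sq_sub_one hx.le) (sq_sqrt_sq_sub_one hy.le) (sq_sqrt_sq_sub_one hz.le)
    (by rw [sq_abs, det3_sq_of_mink_self a b c ha.1 hb.1 hc.1]; ring)
    (cos_hypAngle ha hb hc habc) (sin_hypAngle ha hb hc habc) hcβ hsβ hcγ hsγ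

theorem arcosh_eq_real_arcosh : arcosh = Real.arcosh := rfl

theorem two_mul_cosh_sq_half_arcosh {x : ℝ} (hx : 1 ≤ x) :
    2 * Real.cosh (arcosh x / 2) ^ 2 = x + 1 := by
  rw [arcosh_eq_real_arcosh]
  have h := Real.cosh_two_mul (Real.arcosh x / 2)
  rw [mul_div_cancel₀ _ two_ne_zero, Real.cosh_arcosh hx] at h
  linarith [Real.cosh_sq (Real.arcosh x / 2)]

theorem two_mul_sinh_sq_half_arcosh {x : ℝ} (hx : 1 ≤ x) :
    2 * Real.sinh (arcosh x / 2) ^ 2 = x - 1 := by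
  linarith [two_mul_cosh_sq_half_arcosh hx, Real.cosh_sq (arcosh x / 2)]

theorem tangent_combination_eq_sub_mcross {a b c : Fin 3 → ℝ} (ha : mink a a = -1)
    (hb : mink b b = -1) (hc : mink c c = -1) (habc : det3 a b c ≠ 0)
    (hab : 1 - mink a b ≠ 0) (hac : 1 - mink a c ≠ 0) :
    ((mink a b - mink b c - mink a c - 1) / det3 a b c / (1 - mink a b)) • (b + mink a b • a)
      + ((mink a c - mink b c - mink a b - 1) / det3 a b c / (1 - mink a c)) • (c + mink a c • a)
      = (1 - mink a b)⁻¹ • mcross a b - (1 - mink a c)⁻¹ • mcross a c := by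
  have hV2 := det3_sq_of_mink_self a b c ha hb hc
  apply eq_of_mink_eq _ _ habc
  · simp only [mink_add_left, mink_sub_left, mink_smul_left, mink_mcross,
      det3_eq_zero_of_third_eq_first, mink_comm b a, mink_comm c a, ha]
    ring
  · simp only [mink_add_left, mink_sub_left, mink_smul_left, mink_mcross,
      det3_eq_zero_of_third_eq_second, det3_swap_right a b c, mink_comm c b, hb]
    field_simp
    linear_combination (mink a b - 1) * hV2
  · simp only [mink_add_left, mink_sub_left, mink_smul_left, mink_mcross,
      det3_eq_zero_of_third_eq_second, hc]
    field_simp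
    linear_combination (mink a c - 1) * hV2

theorem tan_combination_eq_sub_mcross {a b c : Fin 3 → ℝ} (ha : inH2 a) (hb : inH2 b)
    (hc : inH2 c) (habc : 0 < det3 a b c) :
    (Real.tan ((hypAngle a b c + hypAngle b c a - hypAngle c a b) / 2)
        / (2 * Real.cosh (arcosh (-mink a b) / 2) ^ 2)) • (b + mink a b • a)
      + (Real.tan ((hypAngle a b c + hypAngle c a b - hypAngle b c a) / 2)
        / (2 * Real.cosh (arcosh (-mink a c) / 2) ^ 2)) • (c + mink a c • a)
      = (1 - mink a b)⁻¹ • mcross a b - (1 - mink a c)⁻¹ • mcross a c := by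
  have hab := mink_le_neg_one ha hb
  have hac := mink_le_neg_one ha hc
  have htan_b := tan_half_hypAngle_add_sub ha hb hc habc.ne'
  have htan_c := tan_half_hypAngle_add_sub ha hc hb
    (by rw [det3_swap_right, neg_ne_zero]; exact habc.ne')
  rw [hypAngle_comm a c b, hypAngle_comm c b a, hypAngle_comm b a c, det3_swap_right, abs_neg,
    mink_comm c b] at htan_c
  rw [htan_b, htan_c, abs_of_pos habc, two_mul_cosh_sq_half_arcosh (by linarith),
    two_mul_cosh_sq_half_arcosh (by linarith), neg_add_eq_sub, neg_add_eq_sub]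
  exact tangent_combination_eq_sub_mcross ha.1 hb.1 hc.1 habc.ne' (by linarith) (by linarith)

theorem sum_smul_eq_zero_of_telescoping {m : ℕ} [NeZero m] {R M : Type*} [Semiring R]
    [AddCommGroup M] [Module R M] {w s t : ZMod m → R} {u F : ZMod m → M}
    (hw : ∀ j, w j = s j + t (j - 1))
    (h : ∀ j, s j • u j + t j • u (j + 1) = F j - F (j + 1)) :
    ∑ j, w j • u j = 0 := by
  have shift (f : ZMod m → M) : ∑ j, f (j + 1) = ∑ j, f j :=
    Equiv.sum_comp (Equiv.addRight (1 : ZMod m)) f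
  calc ∑ j, w j • u j = ∑ j, (s j • u j + t (j - 1) • u (j - 1 + 1)) := by
        simp only [hw, add_smul, sub_add_cancel]
    _ = ∑ j, (s j • u j + t j • u (j + 1)) := by
        rw [Finset.sum_add_distrib, Finset.sum_add_distrib,
          ← shift fun j => t (j - 1) • u (j - 1 + 1)]
        simp only [add_sub_cancel_right]
    _ = 0 := by simp only [h, Finset.sum_sub_distrib, shift, sub_self]

theorem hyp_dual_face_formula_general
    (m : ℕ) [NeZero m]
    (p0 : Fin 3 → ℝ) (p : ZMod m → Fin 3 → ℝ)
    (hp0 : inH2 p0) (hp : ∀ j, inH2 (p j))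
    (hdet : ∀ j : ZMod m, 0 < det3 p0 (p j) (p (j+1))) :
    ∑ j : ZMod m, hypStarWeight m p0 p j • p j
      = (2 * hypStarVertexWeight m p0 p + ∑ j : ZMod m, hypStarWeight m p0 p j) • p0 := by
  have htangent : ∑ j, hypStarWeight m p0 p j • (p j + mink p0 (p j) • p0) = 0 :=
    sum_smul_eq_zero_of_telescoping
      (fun j => by rw [hypStarWeight, add_div, sub_add_cancel])
      (fun j => tan_combination_eq_sub_mcross hp0 (hp j) (hp (j + 1)) (hdet j))
  calc ∑ j, hypStarWeight m p0 p j • p j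
      = ∑ j, (hypStarWeight m p0 p j • (p j + mink p0 (p j) • p0)
          + (hypStarWeight m p0 p j * -mink p0 (p j)) • p0) := by
        refine Finset.sum_congr rfl fun j _ => ?_
        module
    _ = (∑ j, hypStarWeight m p0 p j * -mink p0 (p j)) • p0 := by
        rw [Finset.sum_add_distrib, htangent, zero_add, Finset.sum_smul]
    _ = (2 * hypStarVertexWeight m p0 p + ∑ j, hypStarWeight m p0 p j) • p0 := by
        rw [hypStarVertexWeight, Finset.mul_sum, ← Finset.sum_add_distrib]
        refine congrArg (· • p0) (Finset.sum_congr rfl fun j _ => ?_)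
        have hcosh : 1 ≤ -mink p0 (p j) := by linarith [mink_le_neg_one hp0 (hp j)]
        linear_combination hypStarWeight m p0 p j * (two_mul_sinh_sq_half_arcosh hcosh).symm

/-- Hyperbolic analogue of Lemma 2.2, second part (vertex-star form, Section 3.1):
`∑ c_j·p_j = (2·d₀ + ∑ c_j)·p₀`, equivalently `∑ c_j·(p_j − p₀) = 2·d₀·p₀`. -/
theorem hyp_dual_face_formula
    (m : ℕ) (hm : 3 ≤ m) [NeZero m]
    (p0 : Fin 3 → ℝ) (p : ZMod m → Fin 3 → ℝ)
    (hp0 : inH2 p0) (hp : ∀ j, inH2 (p j))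
    (hdet : ∀ j : ZMod m, 0 < det3 p0 (p j) (p (j+1))) :
    ∑ j : ZMod m, hypStarWeight m p0 p j • p j
      = (2 * hypStarVertexWeight m p0 p + ∑ j : ZMod m, hypStarWeight m p0 p j) • p0 :=
  hyp_dual_face_formula_general m p0 p hp0 hp hdet
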